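/- arXiv:1412.2690 — 2 statements merged into one kernel-verified Lean document; each statement's English description precedes it below -/
import Mathlib

section
/- Uniqueness of the ε-transducer: if R is a prescient rival partition with H[R_0] = H[S_0] (for every input process), then, almost everywhere, R and S are related by a bijection: there exist functions f and g = f^{-1} with S_0 = f(R_0) and R_0 = g(S_0) a.e., and the equivalence relations ∼_η and ∼_ε coincide almost everywhere. -/
/-!
Coarse-graining a discrete random variable `R₀` by a map `f` can only lower its entropy: the mass
of each fibre `f⁻¹{s}` is split among the states in it, and `negMulLog` is strictly superadditive
on positive reals. Hence `H[f(R₀)] = H[R₀]` forces `f` to be injective on the states of positive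
probability, and a left inverse `g` of `f` there satisfies `R₀ = g(S₀)` almost surely whenever
`S₀ = f(R₀)` almost surely.
-/

open MeasureTheory ProbabilityTheory

/-- Shannon entropy (in nats) of the distribution of a random variable `f` under `μ`. -/
noncomputable def entropy' {Ω α : Type*} [MeasurableSpace Ω]
    (μ : Measure Ω) (f : Ω → α) : ℝ :=
  ∑' a : α, Real.negMulLog ((μ (f ⁻¹' {a})).toReal)

namespace Real

lemma neg_mul_log_le_negMulLog {q T : ℝ} (hq : 0 ≤ q) (hqT : q ≤ T) :
    -(q * log T) ≤ negMulLog q := by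
  rcases hq.eq_or_lt with rfl | hq
  · simp
  · rw [negMulLog_eq_neg, neg_le_neg_iff]
    exact mul_le_mul_of_nonneg_left (log_le_log hq hqT) hq.le

lemma neg_mul_log_lt_negMulLog {q T : ℝ} (hq : 0 < q) (hqT : q < T) :
    -(q * log T) < negMulLog q := by
  rw [negMulLog_eq_neg, neg_lt_neg_iff]
  exact mul_lt_mul_of_pos_left (log_lt_log hq hqT) hq

lemma negMulLog_sum {ι : Type*} (t : Finset ι) (q : ι → ℝ) :
    negMulLog (∑ i ∈ t, q i) = ∑ i ∈ t, -(q i * log (∑ j ∈ t, q j)) := by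
  simp only [negMulLog, neg_mul, Finset.sum_mul, Finset.sum_neg_distrib]

lemma negMulLog_sum_le {ι : Type*} (t : Finset ι) {q : ι → ℝ} (hq : ∀ i ∈ t, 0 ≤ q i) :
    negMulLog (∑ i ∈ t, q i) ≤ ∑ i ∈ t, negMulLog (q i) := by
  rw [negMulLog_sum]
  exact Finset.sum_le_sum fun i hi =>
    neg_mul_log_le_negMulLog (hq i hi) (Finset.single_le_sum hq hi)

lemma negMulLog_sum_lt {ι : Type*} (t : Finset ι) {q : ι → ℝ} (hq : ∀ i ∈ t, 0 ≤ q i)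
    {i j : ι} (hi : i ∈ t) (hj : j ∈ t) (hij : i ≠ j) (hqi : 0 < q i) (hqj : 0 < q j) :
    negMulLog (∑ k ∈ t, q k) < ∑ k ∈ t, negMulLog (q k) := by
  rw [negMulLog_sum]
  refine Finset.sum_lt_sum (fun k hk =>
    neg_mul_log_le_negMulLog (hq k hk) (Finset.single_le_sum hq hk)) ⟨i, hi, ?_⟩
  exact neg_mul_log_lt_negMulLog hqi
    (Finset.single_lt_sum hij.symm hi hj hqj fun k hk _ => hq k hk)

lemma injOn_of_sum_negMulLog_fiberwise_eq {ι κ : Type*} [Fintype ι] [Fintype κ]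
    [DecidableEq κ] (f : ι → κ) {q : ι → ℝ} (hq : ∀ i, 0 ≤ q i)
    (h : ∑ k, negMulLog (∑ i with f i = k, q i) = ∑ i, negMulLog (q i)) :
    Set.InjOn f {i | 0 < q i} := by
  intro i hi j hj hij
  by_contra hne
  refine h.not_lt ?_
  calc ∑ k, negMulLog (∑ i with f i = k, q i)
      < ∑ k, ∑ i with f i = k, negMulLog (q i) := by
        refine Finset.sum_lt_sum (fun k _ => negMulLog_sum_le _ fun i _ => hq i)
          ⟨f i, Finset.mem_univ _, ?_⟩
        exact negMulLog_sum_lt _ (fun i _ => hq i) (by simp) (by simp [hij]) hne hi hj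
    _ = ∑ i, negMulLog (q i) := Finset.sum_fiberwise _ _ _

end Real

section Entropy

variable {Ω α β : Type*} [MeasurableSpace Ω] {μ : Measure Ω}

lemma entropy'_congr_ae {X Y : Ω → α} (h : X =ᵐ[μ] Y) : entropy' μ X = entropy' μ Y := by
  refine tsum_congr fun a => ?_
  rw [measure_congr (h.preimage {a})]

lemma ae_measure_preimage_singleton_ne_zero [Countable α] (X : Ω → α) :
    ∀ᵐ ω ∂μ, μ (X ⁻¹' {X ω}) ≠ 0 := by
  have hnull :
      {ω | ¬μ (X ⁻¹' {X ω}) ≠ 0} = ⋃ a ∈ {a | μ (X ⁻¹' {a}) = 0}, X ⁻¹' {a} := by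
    ext ω
    simp
  rw [ae_iff, hnull, measure_biUnion_null_iff (Set.to_countable _)]
  exact fun _ ha => ha

lemma measure_comp_preimage_singleton [Fintype α] [DecidableEq β] [MeasurableSpace α]
    [MeasurableSingletonClass α] {X : Ω → α} (hX : Measurable X) (f : α → β) (b : β) :
    μ ((f ∘ X) ⁻¹' {b}) = ∑ a with f a = b, μ (X ⁻¹' {a}) := by
  rw [sum_measure_preimage_singleton _ fun a _ => hX (measurableSet_singleton a)]
  congr 1
  ext ω
  simp

lemma injOn_of_entropy'_comp_eq [IsFiniteMeasure μ] [Fintype α] [Fintype β]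
    [MeasurableSpace α] [MeasurableSingletonClass α] {X : Ω → α} (hX : Measurable X)
    (f : α → β) (h : entropy' μ (f ∘ X) = entropy' μ X) :
    Set.InjOn f {a | μ (X ⁻¹' {a}) ≠ 0} := by
  classical
  have hinj := Real.injOn_of_sum_negMulLog_fiberwise_eq f
    (q := fun a => (μ (X ⁻¹' {a})).toReal) (fun _ => ENNReal.toReal_nonneg) (by
      simpa only [entropy', tsum_fintype, measure_comp_preimage_singleton hX,
        ENNReal.toReal_sum fun _ _ => measure_ne_top _ _] using h)
  simpa only [ENNReal.toReal_pos_iff, measure_lt_top, and_true, pos_iff_ne_zero] using hinj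

end Entropy

/-- Uniqueness of the ε-transducer.  `S₀ = ε(Zpast)` are the causal states and
`R₀ = η(Zpast)` a prescient rival; by the Refinement Lemma there is `f` with `S₀ = f(R₀)`
almost everywhere (`hf`).  If moreover `H[R₀] = H[S₀]`, then `R` and `S` are a.e. related by a
bijection: there is `g = f⁻¹` with `R₀ = g(S₀)` a.e. and `f ∘ g`, `g ∘ f` the identity on the
a.e.-realized states, and the equivalence relations `∼_η` and `∼_ε` coincide almost
everywhere on pasts. -/
theorem epsilon_transducer_uniqueness {Ω P SA RA : Type*} [MeasurableSpace Ω]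
    [MeasurableSpace P] [Fintype SA] [Fintype RA]
    [MeasurableSpace SA] [MeasurableSingletonClass SA]
    [MeasurableSpace RA] [MeasurableSingletonClass RA]
    (μ : Measure Ω) [IsProbabilityMeasure μ]
    (Zpast : Ω → P) (eps : P → SA) (eta : P → RA)
    (hZ : Measurable Zpast) (hS : Measurable eps) (hR : Measurable eta)
    (f : RA → SA)
    (hf : ∀ᵐ ω ∂μ, eps (Zpast ω) = f (eta (Zpast ω)))
    (hH : entropy' μ (fun ω => eta (Zpast ω)) = entropy' μ (fun ω => eps (Zpast ω))) :
    ∃ g : SA → RA,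
      (∀ᵐ ω ∂μ, eta (Zpast ω) = g (eps (Zpast ω)))
      ∧ (∀ᵐ ω ∂μ, f (g (eps (Zpast ω))) = eps (Zpast ω)
          ∧ g (f (eta (Zpast ω))) = eta (Zpast ω))
      ∧ (∀ᵐ p ∂(μ.map Zpast), ∀ᵐ p' ∂(μ.map Zpast),
          (eta p = eta p' ↔ eps p = eps p')) := by
  have hinj : Set.InjOn f {r | μ ((eta ∘ Zpast) ⁻¹' {r}) ≠ 0} :=
    injOn_of_entropy'_comp_eq (hR.comp hZ) f
      ((entropy'_congr_ae hf).symm.trans hH.symm)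
  have : Nonempty RA := ⟨eta (Zpast (nonempty_of_isProbabilityMeasure μ).some)⟩
  set g := Function.invFunOn f {r | μ ((eta ∘ Zpast) ⁻¹' {r}) ≠ 0}
  have hgf : ∀ᵐ ω ∂μ, g (f (eta (Zpast ω))) = eta (Zpast ω) := by
    filter_upwards [ae_measure_preimage_singleton_ne_zero (eta ∘ Zpast)] with ω hω
    exact hinj.leftInvOn_invFunOn hω
  have hinv : ∀ᵐ ω ∂μ,
      eps (Zpast ω) = f (eta (Zpast ω)) ∧ eta (Zpast ω) = g (eps (Zpast ω)) := by
    filter_upwards [hf, hgf] with ω hfω hgω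
    exact ⟨hfω, by rw [hfω, hgω]⟩
  have hmeas : MeasurableSet {p | eps p = f (eta p) ∧ eta p = g (eps p)} :=
    (measurableSet_eq_fun hS ((measurable_of_countable f).comp hR)).inter
      (measurableSet_eq_fun hR ((measurable_of_countable g).comp hS))
  have hinv_map := (ae_map_iff hZ.aemeasurable hmeas).2 hinv
  refine ⟨g, hinv.mono fun ω h => h.2, ?_, ?_⟩
  · filter_upwards [hinv] with ω ⟨hfω, hgω⟩
    exact ⟨by rw [← hgω, hfω], by rw [← hfω, hgω]⟩
  · filter_upwards [hinv_map] with p ⟨hfp, hgp⟩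
    filter_upwards [hinv_map] with p' ⟨hfp', hgp'⟩
    exact ⟨fun h => by rw [hfp, hfp', h], fun h => by rw [hgp, hgp', h]⟩
end

section
/- Markov order hierarchy inequality: for a causal channel, min(R_iff, R_ifb) ≤ R ≤ min(R_pff, R_pfb), where R is the channel Markov order, R_pff and R_pfb the pure feedforward and pure feedback Markov orders, and R_iff and R_ifb the irreducible feedforward and feedback orders. -/
namespace MarkovOrders

variable {X Y : Type*}

/-- Conditional future morphs of a stationary causal channel:
`c p x y L = P(Y_{0:L} = y | joint past = p, X_{0:L} = x)`, where joint pasts are indexed so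
that `p k` is the joint symbol at time `-1-k`. -/
abbrev Morph (X Y : Type*) := (ℕ → X × Y) → (ℕ → X) → (ℕ → Y) → ℕ → ℝ

/-- Pure feedforward Markov order `R_pff`: the least `M` such that the channel's behavior is
determined by the last `M` input symbols alone (`⊤` if no such `M` exists). -/
noncomputable def pffOrder (c : Morph X Y) : ℕ∞ :=
  sInf {n : ℕ∞ | ∃ M : ℕ, n = M ∧ ∀ p p' : ℕ → X × Y,
    (∀ k < M, (p k).1 = (p' k).1) → c p = c p'}

/-- Pure feedback Markov order `R_pfb`: the least `M` such that the channel's behavior is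
determined by the last `M` output symbols alone. -/
noncomputable def pfbOrder (c : Morph X Y) : ℕ∞ :=
  sInf {n : ℕ∞ | ∃ M : ℕ, n = M ∧ ∀ p p' : ℕ → X × Y,
    (∀ k < M, (p k).2 = (p' k).2) → c p = c p'}

/-- Channel Markov order `R`: the least `M` such that the channel's behavior is determined by
the last `M` joint symbols. -/
noncomputable def chOrder (c : Morph X Y) : ℕ∞ :=
  sInf {n : ℕ∞ | ∃ M : ℕ, n = M ∧ ∀ p p' : ℕ → X × Y,
    (∀ k < M, p k = p' k) → c p = c p'}

/-- Irreducible feedforward Markov order `R_iff`: the least `M` such that the last `M` input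
symbols together with the full output past determine the channel's behavior. -/
noncomputable def iffOrder (c : Morph X Y) : ℕ∞ :=
  sInf {n : ℕ∞ | ∃ M : ℕ, n = M ∧ ∀ p p' : ℕ → X × Y,
    (∀ k < M, (p k).1 = (p' k).1) → (∀ k, (p k).2 = (p' k).2) → c p = c p'}

/-- Irreducible feedback Markov order `R_ifb`: the least `M` such that the last `M` output
symbols together with the full input past determine the channel's behavior. -/
noncomputable def ifbOrder (c : Morph X Y) : ℕ∞ :=
  sInf {n : ℕ∞ | ∃ M : ℕ, n = M ∧ ∀ p p' : ℕ → X × Y,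
    (∀ k < M, (p k).2 = (p' k).2) → (∀ k, (p k).1 = (p' k).1) → c p = c p'}

/-- Markov order hierarchy for a causal channel:
`min(R_iff, R_ifb) ≤ R ≤ min(R_pff, R_pfb)`. -/
theorem markov_order_hierarchy (c : Morph X Y) :
    min (iffOrder c) (ifbOrder c) ≤ chOrder c
    ∧ chOrder c ≤ min (pffOrder c) (pfbOrder c) := by
  constructor
  · refine le_trans (min_le_left _ _) (sInf_le_sInf ?_)
    rintro n ⟨M, rfl, h⟩
    exact ⟨M, rfl, fun p p' h1 h2 => h p p'
      (fun k hk => Prod.ext (h1 k hk) (h2 k))⟩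
  · refine le_min (sInf_le_sInf ?_) (sInf_le_sInf ?_)
    · rintro n ⟨M, rfl, h⟩
      exact ⟨M, rfl, fun p p' h1 => h p p'
        (fun k hk => congrArg Prod.fst (h1 k hk))⟩
    · rintro n ⟨M, rfl, h⟩
      exact ⟨M, rfl, fun p p' h1 => h p p'
        (fun k hk => congrArg Prod.snd (h1 k hk))⟩

end MarkovOrders
end
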